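/- For p ∈ {2, 3, 7} and all natural numbers n, the Apéry number A1(n) = \sum_{k=0}^n \binom{n}{k}^2 \binom{n+k}{k}^2 is not divisible by p. -/

import Mathlib

/-!
Lucas' theorem gives `C(pm + r, pj + s) ≡ C(r, s) C(m, j)` and `C(p(m + j) + r + s, pj + s) ≡
C(r + s, s) C(m + j, j)` modulo `p` for digits `r, s < p` (when `r + s ≥ p` both sides vanish).
Hence every summand of `A1 (pm + r)` factors, and the sum becomes `A1 m * A1 r` modulo `p`.
By induction on the base-`p` digits, `p ∤ A1 n` as soon as `p ∤ A1 r` for every digit `r < p`,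
which for `p = 2, 3, 7` is a finite check.
-/

def A1 (n : ℕ) : ℤ :=
  ∑ k ∈ Finset.range (n + 1), (n.choose k : ℤ) ^ 2 * ((n + k).choose k : ℤ) ^ 2

open Finset

def aperyTerm (n k : ℕ) : ℤ :=
  (n.choose k : ℤ) ^ 2 * ((n + k).choose k : ℤ) ^ 2

theorem A1_eq_sum_aperyTerm {n N : ℕ} (h : n < N) : A1 n = ∑ k ∈ range N, aperyTerm n k :=
  sum_subset (range_subset_range.mpr h) fun k _ hk => by
    simp [Nat.choose_eq_zero_of_lt (not_lt.mp (mt mem_range.mpr hk))]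

theorem Finset.sum_range_mul_eq_sum_sum {M : Type*} [AddCommMonoid M] (f : ℕ → M) (p m : ℕ) :
    ∑ k ∈ range (p * m), f k = ∑ j ∈ range m, ∑ s ∈ range p, f (p * j + s) := by
  induction m with
  | zero => simp
  | succ m ih => rw [Nat.mul_succ, sum_range_add, ih, sum_range_succ]

section Lucas

variable {p : ℕ} [Fact p.Prime]

theorem cast_choose_mul_add_mul_add {a b c d : ℕ} (hb : b < p) (hd : d < p) :
    ((p * a + b).choose (p * c + d) : ZMod p) = b.choose d * a.choose c := by
  have h := (ZMod.intCast_eq_intCast_iff _ _ _).mpr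
    (Choose.choose_modEq_choose_mod_mul_choose_div (n := p * a + b) (k := p * c + d) (p := p))
  push_cast at h
  have hp := (Fact.out : p.Prime).pos
  rwa [Nat.mul_add_mod, Nat.mul_add_mod, Nat.mod_eq_of_lt hb, Nat.mod_eq_of_lt hd,
    Nat.mul_add_div hp, Nat.mul_add_div hp, Nat.div_eq_of_lt hb, Nat.div_eq_of_lt hd, add_zero,
    add_zero] at h

theorem cast_add_choose_mul_add {m r j s : ℕ} (hr : r < p) (hs : s < p) :
    ((p * m + r + (p * j + s)).choose (p * j + s) : ZMod p) =
      (r + s).choose s * (m + j).choose j := by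
  rcases lt_or_ge (r + s) p with hlt | hge
  · rw [show p * m + r + (p * j + s) = p * (m + j) + (r + s) by ring,
      cast_choose_mul_add_mul_add hlt hs]
  · have hcarry : ((r + s).choose s : ZMod p) = 0 := by
      rw [ZMod.natCast_eq_zero_iff, add_comm]
      exact (Fact.out : p.Prime).dvd_choose_add hs hr (by omega)
    have hcarried : p * m + r + (p * j + s) = p * (m + j + 1) + (r + s - p) := by
      rw [mul_add, mul_add]
      omega
    rw [hcarried,
      cast_choose_mul_add_mul_add (by omega) hs, Nat.choose_eq_zero_of_lt (by omega), hcarry]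
    simp

theorem cast_aperyTerm_mul_add {m r j s : ℕ} (hr : r < p) (hs : s < p) :
    (aperyTerm (p * m + r) (p * j + s) : ZMod p) = aperyTerm m j * aperyTerm r s := by
  simp only [aperyTerm, Int.cast_mul, Int.cast_pow, Int.cast_natCast]
  rw [cast_choose_mul_add_mul_add hr hs, cast_add_choose_mul_add hr hs]
  ring

theorem cast_A1_mul_add (m : ℕ) {r : ℕ} (hr : r < p) :
    (A1 (p * m + r) : ZMod p) = A1 m * A1 r := by
  have hsum : p * m + r < p * (m + 1) := by rw [mul_add, mul_one]; omega
  calc (A1 (p * m + r) : ZMod p)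
      = ∑ j ∈ range (m + 1), ∑ s ∈ range p,
          (aperyTerm (p * m + r) (p * j + s) : ZMod p) := by
        rw [A1_eq_sum_aperyTerm hsum, Int.cast_sum, sum_range_mul_eq_sum_sum]
    _ = ∑ j ∈ range (m + 1), ∑ s ∈ range p, (aperyTerm m j * aperyTerm r s : ZMod p) :=
        sum_congr rfl fun j _ => sum_congr rfl fun s hs =>
          cast_aperyTerm_mul_add hr (mem_range.mp hs)
    _ = A1 m * A1 r := by
        rw [← sum_mul_sum, A1_eq_sum_aperyTerm (Nat.lt_succ_self m), A1_eq_sum_aperyTerm hr]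
        push_cast
        rfl

theorem cast_A1_ne_zero (hdigit : ∀ r < p, (A1 r : ZMod p) ≠ 0) (n : ℕ) :
    (A1 n : ZMod p) ≠ 0 := by
  induction n using Nat.strong_induction_on with
  | _ n ih =>
  rcases lt_or_ge n p with hn | hn
  · exact hdigit n hn
  have hp := (Fact.out : p.Prime).one_lt
  have hmod := Nat.mod_lt n (by omega : p > 0)
  rw [← Nat.div_add_mod n p, cast_A1_mul_add _ hmod]
  exact mul_ne_zero (ih _ (Nat.div_lt_self (by omega) hp)) (ih _ (by omega))

end Lucas

theorem apery1_coprime_237 (p : ℕ) (hp : p = 2 ∨ p = 3 ∨ p = 7) (n : ℕ) :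
    ¬ (p : ℤ) ∣ A1 n := by
  have : Fact p.Prime := ⟨by rcases hp with rfl | rfl | rfl <;> norm_num⟩
  rw [← ZMod.intCast_zmod_eq_zero_iff_dvd]
  refine cast_A1_ne_zero (fun r hr => ?_) n
  rw [Ne, ZMod.intCast_zmod_eq_zero_iff_dvd]
  rcases hp with rfl | rfl | rfl <;> revert r <;> decide
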